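/- For any k×n matrix M over the polynomial ring F[ξ_1,...,ξ_N] of rank k (over the fraction field) and for any field F of sufficient size, there exists an evaluation point such that the evaluated matrix has the same diameter as M; in particular, the minimum distance n - ρ + 1 determined by the diameter ρ of M is achievable by some matrix over F with the same zero pattern. -/

import Mathlib

/-!
Finitely many maximal minors of `M` are nonzero polynomials, so their product is a nonzero
polynomial; at a point where it does not vanish every nonsingular maximal minor stays nonsingular,
while singular ones stay singular, so the diameter is preserved. Full rank over the fraction field
gives at least one nonsingular maximal minor, hence `ρ ≤ n`. A nonzero codeword vanishing on `ρ`
coordinates would lie in the left kernel of a nonsingular `k × k` minor, so every nonzero codeword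
has weight at least `n - ρ + 1`.
-/

open Matrix MvPolynomial

/-- The diameter of a k×n matrix over a commutative ring: the least ρ such that any ρ
columns contain a k×k submatrix with nonzero determinant. -/
noncomputable def matDiameter {R : Type*} [CommRing R] {k n : ℕ}
    (M : Matrix (Fin k) (Fin n) R) : ℕ :=
  sInf {ρ | ∀ s : Finset (Fin n), s.card = ρ → ∃ g : Fin k → Fin n,
    Function.Injective g ∧ (∀ i, g i ∈ s) ∧ (M.submatrix id g).det ≠ 0}

theorem Submodule.exists_smul_mem_of_finrank_eq {R M : Type*} [CommRing R] [IsDomain R]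
    [AddCommGroup M] [Module R M] [Module.Finite R M] {N : Submodule R M}
    (h : Module.finrank R N = Module.finrank R M) (x : M) : ∃ a : R, a ≠ 0 ∧ a • x ∈ N := by
  have hquot : Module.finrank R (M ⧸ N) = 0 := by
    have := N.finrank_quotient_add_finrank
    omega
  obtain ⟨a, ha, hax⟩ := Module.finrank_eq_zero_iff.mp hquot (N.mkQ x)
  exact ⟨a, ha, (Submodule.Quotient.mk_eq_zero N).mp (by simpa using hax)⟩

namespace Matrix

variable {m n : Type*} [Fintype m] [Fintype n]

omit [Fintype n] in
theorem det_map_submatrix {R S : Type*} [CommRing R] [CommRing S] [DecidableEq m] (f : R →+* S)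
    (A : Matrix m n R) (g : m → n) : ((A.map f).submatrix id g).det = f (A.submatrix id g).det :=
  (RingHom.map_det f _).symm

theorem linearIndependent_row_of_rank_eq_card {R : Type*} [CommRing R] [IsDomain R]
    [DecidableEq m] {A : Matrix m n R} (hA : A.rank = Fintype.card m) :
    LinearIndependent R A.row := by
  rw [← vecMul_injective_iff, ← coe_vecMulLinear, ← LinearMap.ker_eq_bot,
    LinearMap.ker_eq_bot']
  intro x hx
  funext i
  have hfull : Module.finrank R (LinearMap.range A.mulVecLin) = Module.finrank R (m → R) := by
    rw [← rank, hA, Module.finrank_fintype_fun_eq_card]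
  -- `x` is orthogonal to the column space, which contains a nonzero multiple of each basis vector.
  obtain ⟨a, ha, v, hv⟩ := Submodule.exists_smul_mem_of_finrank_eq hfull (Pi.single i 1)
  have : a * x i = 0 := by
    calc a * x i = x ⬝ᵥ (a • Pi.single i 1) := by simp
      _ = 0 := by rw [← hv, mulVecLin_apply, dotProduct_mulVec, ← vecMulLinear_apply, hx,
        zero_dotProduct]
  exact (mul_eq_zero.mp this).resolve_left ha

theorem exists_det_submatrix_ne_zero_of_linearIndependent_row {K : Type*} [Field K]
    [DecidableEq m] {A : Matrix m n K} (hA : LinearIndependent K A.row) :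
    ∃ g : m → n, Function.Injective g ∧ (A.submatrix id g).det ≠ 0 := by
  obtain ⟨κ, c, hc, hspan, hli⟩ := exists_linearIndependent' K A.col
  have : Fintype κ := have := Finite.of_injective c hc; Fintype.ofFinite κ
  have hcard : Fintype.card m = Fintype.card κ := by
    rw [← hA.rank_matrix, rank_eq_finrank_span_cols, ← hspan, finrank_span_eq_card hli]
  let e : m ≃ κ := Fintype.equivOfCardEq hcard
  refine ⟨c ∘ e, hc.comp e.injective, ?_⟩
  rw [← isUnit_iff_ne_zero, ← isUnit_iff_isUnit_det, ← linearIndependent_cols_iff_isUnit]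
  exact hli.comp e e.injective

theorem exists_det_submatrix_ne_zero_of_rank_eq_card {R : Type*} [CommRing R] [IsDomain R]
    [DecidableEq m] {A : Matrix m n R} (hA : A.rank = Fintype.card m) :
    ∃ g : m → n, Function.Injective g ∧ (A.submatrix id g).det ≠ 0 := by
  let K := FractionRing R
  have hli : LinearIndependent K (A.map (algebraMap R K)).row := by
    rw [← LinearIndependent.iff_fractionRing R K]
    exact (linearIndependent_row_of_rank_eq_card hA).map' ((Algebra.linearMap R K).compLeft n)
      (LinearMap.ker_eq_bot.mpr fun _ _ h => funext fun j =>
        IsFractionRing.injective R K (congrFun h j))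
  obtain ⟨g, hg, hdet⟩ := exists_det_submatrix_ne_zero_of_linearIndependent_row hli
  refine ⟨g, hg, fun h => hdet ?_⟩
  rw [det_map_submatrix, h, map_zero]

end Matrix

theorem MvPolynomial.exists_forall_eval_ne_zero {σ R ι : Type*} [CommRing R] [IsDomain R]
    [Fintype ι] (hR : ∀ p : MvPolynomial σ R, p ≠ 0 → ∃ a : σ → R, eval a p ≠ 0)
    (p : ι → MvPolynomial σ R) : ∃ a : σ → R, ∀ i, p i ≠ 0 → eval a (p i) ≠ 0 := by
  classical
  obtain ⟨a, ha⟩ := hR (∏ i ∈ Finset.univ.filter (p · ≠ 0), p i)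
    (Finset.prod_ne_zero_iff.mpr fun i hi => (Finset.mem_filter.mp hi).2)
  rw [map_prod, Finset.prod_ne_zero_iff] at ha
  exact ⟨a, fun i hi => ha i (Finset.mem_filter.mpr ⟨Finset.mem_univ i, hi⟩)⟩

section matDiameter

variable {R : Type*} [CommRing R] {k n : ℕ} {M : Matrix (Fin k) (Fin n) R}

theorem matDiameter_map_eq {S : Type*} [CommRing S] (f : R →+* S)
    (hf : ∀ g, (M.submatrix id g).det ≠ 0 → f (M.submatrix id g).det ≠ 0) :
    matDiameter (M.map f) = matDiameter M := by
  have key (g : Fin k → Fin n) :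
      ((M.map f).submatrix id g).det ≠ 0 ↔ (M.submatrix id g).det ≠ 0 := by
    rw [det_map_submatrix]
    exact ⟨fun h h0 => h (by rw [h0, map_zero]), hf g⟩
  simp only [matDiameter, key]

variable (hM : ∃ g : Fin k → Fin n, Function.Injective g ∧ (M.submatrix id g).det ≠ 0)
include hM

theorem exists_det_submatrix_ne_zero_of_card_eq_width (s : Finset (Fin n)) (hs : s.card = n) :
    ∃ g : Fin k → Fin n, Function.Injective g ∧ (∀ i, g i ∈ s) ∧ (M.submatrix id g).det ≠ 0 := by
  obtain ⟨g, hg, hdet⟩ := hM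
  exact ⟨g, hg, fun i => Finset.eq_univ_of_card s (by simpa using hs) ▸ Finset.mem_univ _, hdet⟩

theorem matDiameter_le_width : matDiameter M ≤ n :=
  Nat.sInf_le (exists_det_submatrix_ne_zero_of_card_eq_width hM)

theorem exists_det_submatrix_ne_zero_of_card_eq_matDiameter (s : Finset (Fin n))
    (hs : s.card = matDiameter M) :
    ∃ g : Fin k → Fin n, Function.Injective g ∧ (∀ i, g i ∈ s) ∧ (M.submatrix id g).det ≠ 0 := by
  have hmem : matDiameter M ∈ {ρ | ∀ s : Finset (Fin n), s.card = ρ → ∃ g : Fin k → Fin n,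
      Function.Injective g ∧ (∀ i, g i ∈ s) ∧ (M.submatrix id g).det ≠ 0} :=
    Nat.sInf_mem ⟨n, exists_det_submatrix_ne_zero_of_card_eq_width hM⟩
  exact hmem s hs

theorem sub_matDiameter_add_one_le_hammingNorm_vecMul [IsDomain R] [DecidableEq R]
    {X : Fin k → R} (hX : X ≠ 0) : n - matDiameter M + 1 ≤ hammingNorm (X ᵥ* M) := by
  set v := X ᵥ* M
  by_contra! hlt
  set Z := Finset.univ.filter (v · = 0)
  have hZ : Z.card + hammingNorm v = n :=
    (Finset.card_filter_add_card_filter_not (s := Finset.univ) (v · = 0)).trans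
      (Finset.card_fin n)
  have hle := matDiameter_le_width hM
  obtain ⟨s, hsZ, hs⟩ := Finset.exists_subset_card_eq (show matDiameter M ≤ Z.card by omega)
  obtain ⟨g, -, hgs, hdet⟩ := exists_det_submatrix_ne_zero_of_card_eq_matDiameter hM s hs
  exact hdet (exists_vecMul_eq_zero_iff.mp
    ⟨X, hX, funext fun i => (Finset.mem_filter.mp (hsZ (hgs i))).2⟩)

end matDiameter

/-- For a rank-k polynomial matrix M over a sufficiently large field F (every nonzero
polynomial has a nonvanishing point), there is an evaluation point such that the evaluated
matrix has the same diameter ρ as M, preserves the zero pattern, and its row space attains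
minimum distance n-ρ+1. -/
theorem stmt14 {F : Type*} [Field F] [DecidableEq F] {k n N : ℕ}
    (M : Matrix (Fin k) (Fin n) (MvPolynomial (Fin N) F)) (hrank : M.rank = k)
    (hF : ∀ p : MvPolynomial (Fin N) F, p ≠ 0 → ∃ a : Fin N → F, eval a p ≠ 0) :
    ∃ a : Fin N → F,
      matDiameter (M.map (eval a)) = matDiameter M ∧
      (∀ i j, M i j = 0 → M.map (eval a) i j = 0) ∧
      (∀ X : Fin k → F, X ≠ 0 →
        n - matDiameter M + 1 ≤ hammingNorm (vecMul X (M.map (eval a)))) := by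
  obtain ⟨a, ha⟩ := exists_forall_eval_ne_zero hF fun g : Fin k → Fin n => (M.submatrix id g).det
  have hdiam : matDiameter (M.map (eval a)) = matDiameter M := matDiameter_map_eq (eval a) ha
  obtain ⟨g, hg, hdet⟩ :=
    exists_det_submatrix_ne_zero_of_rank_eq_card (hrank.trans (Fintype.card_fin k).symm)
  have hminor : ∃ g : Fin k → Fin n, Function.Injective g ∧
      ((M.map (eval a)).submatrix id g).det ≠ 0 :=
    ⟨g, hg, by rw [det_map_submatrix]; exact ha g hdet⟩
  refine ⟨a, hdiam, fun i j h => by simp [h], fun X hX => ?_⟩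
  rw [← hdiam]
  exact sub_matDiameter_add_one_le_hammingNorm_vecMul hminor hX
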